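/- arXiv:1604.02009 — 3 statements merged into one kernel-verified Lean document; each statement's English description precedes it below -/
import Mathlib

section
/- Let Z : ℝⁿ → (ℝⁿ →ₗ[ℝ] ℝⁿ) be continuously differentiable with Z(x) skew-adjoint for every x (i.e. ⟨Z(x)v, v⟩ = 0 for all v). Then for every initial position x₀ ∈ ℝⁿ and initial velocity v₀ ∈ ℝⁿ there exists a twice differentiable curve γ : ℝ → ℝⁿ, defined on all of ℝ, satisfying γ(0) = x₀, γ'(0) = v₀, and γ''(t) = Z(γ(t))(γ'(t)) for all t ∈ ℝ. In other words, magnetic geodesics exist for all time. -/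
/-!
Since `⟪Z x v, v⟫ = 0`, speed is conserved along a magnetic geodesic, so on `[-T, T]` a solution
starting at `(x₀, v₀)` stays in the ball of radius `‖v₀‖ (T + 1)` about `(x₀, 0)` in phase space.
Cutting the phase-space field `(x, v) ↦ (v, Z x v)` off outside a slightly larger ball gives a
bounded, globally Lipschitz field; its Picard–Lindelöf solution on `[-T, T]` obeys the same
bounds, hence never feels the cut-off and solves the original system. As the field is `C¹`, hence
locally Lipschitz, these solutions agree on common intervals and glue to one defined on `ℝ`.
-/

open scoped RealInnerProductSpace

open Set Metric Topology

section IntegralCurve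

variable {F : Type*} [NormedAddCommGroup F] [NormedSpace ℝ F] {f : F → F}

theorem LipschitzWith.exists_isIntegralCurveOn_Icc [CompleteSpace F] {K : NNReal}
    (hf : LipschitzWith K f) {C : ℝ} (hC : ∀ x, ‖f x‖ ≤ C) (x₀ : F) {T : ℝ} (hT : 0 ≤ T) :
    ∃ γ : ℝ → F, γ 0 = x₀ ∧ IsIntegralCurveOn γ (fun _ ↦ f) (Icc (-T) T) := by
  have hC₀ : 0 ≤ C := (norm_nonneg _).trans (hC x₀)
  have hpl : IsPicardLindelof (fun _ ↦ f) (⟨0, by simpa using hT⟩ : Icc (-T) T) x₀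
      (C * T).toNNReal 0 C.toNNReal K :=
    .of_time_independent (fun x _ ↦ (hC x).trans (Real.le_coe_toNNReal C))
      hf.lipschitzOnWith (by simp [Real.coe_toNNReal _ hC₀, mul_nonneg hC₀ hT])
  exact hpl.exists_eq_forall_mem_Icc_hasDerivWithinAt₀

theorem LocallyLipschitz.eqOn_of_isIntegralCurveOn_Icc (hf : LocallyLipschitz f)
    {γ₁ γ₂ : ℝ → F} {a b t₀ : ℝ} (ht₀ : t₀ ∈ Ioo a b)
    (h₁ : IsIntegralCurveOn γ₁ (fun _ ↦ f) (Icc a b))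
    (h₂ : IsIntegralCurveOn γ₂ (fun _ ↦ f) (Icc a b)) (heq : γ₁ t₀ = γ₂ t₀) :
    EqOn γ₁ γ₂ (Icc a b) := by
  set s := γ₁ '' Icc a b ∪ γ₂ '' Icc a b
  obtain ⟨K, hK⟩ : ∃ K, LipschitzOnWith K f s :=
    hf.locallyLipschitzOn.exists_lipschitzOnWith_of_compact <|
      (isCompact_Icc.image_of_continuousOn h₁.continuousOn).union
        (isCompact_Icc.image_of_continuousOn h₂.continuousOn)
  have hderiv {γ : ℝ → F} (h : IsIntegralCurveOn γ (fun _ ↦ f) (Icc a b)) :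
      ∀ t ∈ Ioo a b, HasDerivAt γ (f (γ t)) t := fun t ht ↦
    (h t (Ioo_subset_Icc_self ht)).hasDerivAt (Icc_mem_nhds ht.1 ht.2)
  exact ODE_solution_unique_of_mem_Icc (s := fun _ ↦ s) (fun _ _ ↦ hK) ht₀
    h₁.continuousOn (hderiv h₁) (fun t ht ↦ .inl (mem_image_of_mem _ (Ioo_subset_Icc_self ht)))
    h₂.continuousOn (hderiv h₂) (fun t ht ↦ .inr (mem_image_of_mem _ (Ioo_subset_Icc_self ht)))
    heq

theorem LocallyLipschitz.exists_isIntegralCurve (hf : LocallyLipschitz f) {x₀ : F}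
    (h : ∀ T ≥ 0, ∃ γ : ℝ → F, γ 0 = x₀ ∧ IsIntegralCurveOn γ (fun _ ↦ f) (Icc (-T) T)) :
    ∃ γ : ℝ → F, γ 0 = x₀ ∧ IsIntegralCurve γ (fun _ ↦ f) := by
  choose! γ hγ₀ hγ using h
  have hagree {T₁ T₂ : ℝ} (h₁ : 0 < T₁) (h₁₂ : T₁ ≤ T₂) : EqOn (γ T₁) (γ T₂) (Icc (-T₁) T₁) :=
    hf.eqOn_of_isIntegralCurveOn_Icc (t₀ := 0) ⟨by linarith, h₁⟩ (hγ T₁ h₁.le)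
      ((hγ T₂ (h₁.le.trans h₁₂)).mono (Icc_subset_Icc (by linarith) h₁₂))
      ((hγ₀ T₁ h₁.le).trans (hγ₀ T₂ (h₁.le.trans h₁₂)).symm)
  refine ⟨fun t ↦ γ (|t| + 1) t, by simpa using hγ₀ 1 zero_le_one, fun t ↦ ?_⟩
  have hT : 0 < |t| + 1 := by positivity
  have ht : t ∈ Ioo (-(|t| + 1)) (|t| + 1) := abs_lt.mp (lt_add_one _)
  have hloc : (fun s ↦ γ (|s| + 1) s) =ᶠ[𝓝 t] γ (|t| + 1) := by
    filter_upwards [Ioo_mem_nhds ht.1 ht.2] with s hs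
    rcases le_total (|s| + 1) (|t| + 1) with hst | hts
    · exact hagree (by positivity) hst (Ioo_subset_Icc_self (abs_lt.mp (lt_add_one _)))
    · exact (hagree hT hts (Ioo_subset_Icc_self hs)).symm
  exact ((hγ _ hT.le t (Ioo_subset_Icc_self ht)).hasDerivAt
    (Icc_mem_nhds ht.1 ht.2)).congr_of_eventuallyEq hloc

end IntegralCurve

section Magnetic

variable {E : Type*} [NormedAddCommGroup E] [InnerProductSpace ℝ E]

def magneticField (Z : E → E →L[ℝ] E) (p : E × E) : E × E := (p.2, Z p.1 p.2)

theorem contDiff_magneticField {Z : E → E →L[ℝ] E} (hZ : ContDiff ℝ 1 Z) :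
    ContDiff ℝ 1 (magneticField Z) :=
  contDiff_snd.prodMk ((hZ.comp contDiff_fst).clm_apply contDiff_snd)

theorem Convex.norm_eq_of_hasDerivWithinAt_of_inner_eq_zero {u u' : ℝ → E} {s : Set ℝ}
    (hs : Convex ℝ s) (hu : ∀ t ∈ s, HasDerivWithinAt u (u' t) s t)
    (horth : ∀ t ∈ s, ⟪u t, u' t⟫ = 0) {a b : ℝ} (ha : a ∈ s) (hb : b ∈ s) :
    ‖u b‖ = ‖u a‖ := by
  have hconst := hs.norm_image_sub_le_of_norm_hasDerivWithin_le (C := 0)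
    (fun t ht ↦ (hu t ht).norm_sq) (fun t ht ↦ by simp [horth t ht]) ha hb
  rw [zero_mul, norm_le_zero_iff, sub_eq_zero] at hconst
  exact (pow_left_inj₀ (norm_nonneg _) (norm_nonneg _) two_ne_zero).mp hconst

variable {Z : E → E →L[ℝ] E} {c : E × E → ℝ} {γ : ℝ → E × E} {s : Set ℝ} {a b : ℝ}

theorem IsIntegralCurveOn.norm_snd_eq_of_smul_magneticField (hskew : ∀ x v, ⟪Z x v, v⟫ = 0)
    (hγ : IsIntegralCurveOn γ (fun _ p ↦ c p • magneticField Z p) s) (hs : Convex ℝ s)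
    (ha : a ∈ s) (hb : b ∈ s) : ‖(γ b).2‖ = ‖(γ a).2‖ :=
  hs.norm_eq_of_hasDerivWithinAt_of_inner_eq_zero
    (fun t ht ↦ hasFDerivAt_snd.comp_hasDerivWithinAt t (hγ t ht))
    (fun t _ ↦ by
      change ⟪(γ t).2, c (γ t) • Z (γ t).1 (γ t).2⟫ = 0
      rw [inner_smul_right, real_inner_comm, hskew, mul_zero]) ha hb

theorem IsIntegralCurveOn.norm_fst_sub_le_of_smul_magneticField
    (hskew : ∀ x v, ⟪Z x v, v⟫ = 0) (hc : ∀ p, ‖c p‖ ≤ 1)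
    (hγ : IsIntegralCurveOn γ (fun _ p ↦ c p • magneticField Z p) s) (hs : Convex ℝ s)
    (ha : a ∈ s) (hb : b ∈ s) : ‖(γ b).1 - (γ a).1‖ ≤ ‖(γ a).2‖ * ‖b - a‖ := by
  refine hs.norm_image_sub_le_of_norm_hasDerivWithin_le
    (fun t ht ↦ hasFDerivAt_fst.comp_hasDerivWithinAt t (hγ t ht)) (fun t ht ↦ ?_) ha hb
  calc ‖c (γ t) • (γ t).2‖ = ‖c (γ t)‖ * ‖(γ a).2‖ := by
        rw [norm_smul, hγ.norm_snd_eq_of_smul_magneticField hskew hs ha ht]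
    _ ≤ ‖(γ a).2‖ := mul_le_of_le_one_left (norm_nonneg _) (hc _)

theorem exists_isIntegralCurveOn_magneticField_Icc [FiniteDimensional ℝ E]
    (hZ : ContDiff ℝ 1 Z) (hskew : ∀ x v, ⟪Z x v, v⟫ = 0) (x₀ v₀ : E) {T : ℝ} (hT : 0 ≤ T) :
    ∃ γ : ℝ → E × E, γ 0 = (x₀, v₀) ∧
      IsIntegralCurveOn γ (fun _ ↦ magneticField Z) (Icc (-T) T) := by
  let χ : ContDiffBump ((x₀, 0) : E × E) :=
    ⟨‖v₀‖ * (T + 1) + 1, ‖v₀‖ * (T + 1) + 2, by positivity, by linarith⟩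
  have hW : ContDiff ℝ 1 fun p ↦ χ p • magneticField Z p :=
    χ.contDiff.smul (contDiff_magneticField hZ)
  have hWc : HasCompactSupport fun p ↦ χ p • magneticField Z p := χ.hasCompactSupport.smul_right
  obtain ⟨K, hK⟩ := hW.lipschitzWith_of_hasCompactSupport hWc one_ne_zero
  obtain ⟨C, hC⟩ := hWc.exists_bound_of_continuous hW.continuous
  obtain ⟨γ, hγ₀, hγ⟩ := hK.exists_isIntegralCurveOn_Icc hC (x₀, v₀) hT
  have h₀ : (0 : ℝ) ∈ Icc (-T) T := ⟨by linarith, hT⟩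
  have hχ : ∀ p, ‖χ p‖ ≤ 1 := fun _ ↦ (Real.norm_of_nonneg χ.nonneg).trans_le χ.le_one
  have hball (t : ℝ) (ht : t ∈ Icc (-T) T) : γ t ∈ closedBall (x₀, 0) χ.rIn := by
    have hspeed := hγ.norm_snd_eq_of_smul_magneticField hskew (convex_Icc _ _) h₀ ht
    have hpos := hγ.norm_fst_sub_le_of_smul_magneticField hskew hχ (convex_Icc _ _) h₀ ht
    simp only [hγ₀, sub_zero, Real.norm_eq_abs] at hspeed hpos
    have htT : ‖v₀‖ * |t| ≤ ‖v₀‖ * T :=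
      mul_le_mul_of_nonneg_left (abs_le.mpr ht) (norm_nonneg _)
    have hv₀T : 0 ≤ ‖v₀‖ * T := mul_nonneg (norm_nonneg _) hT
    rw [mem_closedBall, Prod.dist_eq, dist_eq_norm, dist_zero_right, hspeed]
    change max ‖(γ t).1 - x₀‖ ‖v₀‖ ≤ ‖v₀‖ * (T + 1) + 1
    exact max_le (by linarith [norm_nonneg v₀]) (by linarith)
  refine ⟨γ, hγ₀, fun t ht ↦ ?_⟩
  simpa only [χ.one_of_mem_closedBall (hball t ht), one_smul] using hγ t ht

end Magnetic

/-- Long-time existence of magnetic geodesics: for a `C¹` field of skew-adjoint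
operators `Z`, every initial condition gives rise to a magnetic geodesic
`γ'' = Z (γ) (γ')` defined on all of `ℝ`. -/
theorem magnetic_geodesic_global_existence {n : ℕ}
    (Z : EuclideanSpace ℝ (Fin n) → (EuclideanSpace ℝ (Fin n) →L[ℝ] EuclideanSpace ℝ (Fin n)))
    (hZ : ContDiff ℝ 1 Z)
    (hskew : ∀ (x v : EuclideanSpace ℝ (Fin n)), ⟪Z x v, v⟫ = 0)
    (x₀ v₀ : EuclideanSpace ℝ (Fin n)) :
    ∃ γ γ' : ℝ → EuclideanSpace ℝ (Fin n),
      γ 0 = x₀ ∧ γ' 0 = v₀ ∧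
      (∀ t : ℝ, HasDerivAt γ (γ' t) t) ∧
      (∀ t : ℝ, HasDerivAt γ' (Z (γ t) (γ' t)) t) := by
  obtain ⟨γ, hγ₀, hγ⟩ := (contDiff_magneticField hZ).locallyLipschitz.exists_isIntegralCurve
    fun _ hT ↦ exists_isIntegralCurveOn_magneticField_Icc hZ hskew x₀ v₀ hT
  exact ⟨fun t ↦ (γ t).1, fun t ↦ (γ t).2, congrArg Prod.fst hγ₀, congrArg Prod.snd hγ₀,
    fun t ↦ hasFDerivAt_fst.comp_hasDerivAt (f := γ) t (hγ t),
    fun t ↦ hasFDerivAt_snd.comp_hasDerivAt (f := γ) t (hγ t)⟩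
end

section
/- Let U ⊆ ℝ² be open and S : U → ℝ³ a smooth immersion, with partial derivatives S_u, S_v and normal field N = S_u × S_v (nonvanishing). Let (u, v) : I → U be twice differentiable on an interval I, set γ(t) = S(u(t), v(t)), write n(t) = N(u(t), v(t)), and assume γ'(t) ≠ 0 for all t. Let κ : I → ℝ. Then γ satisfies the prescribed geodesic curvature (magnetic geodesic) equation γ''(t) − (⟨γ''(t), n(t)⟩ / ‖n(t)‖²) n(t) = κ(t) · (γ'(t) × n(t)) / ‖n(t)‖ for all t ∈ I, if and only if for all t ∈ I: (i) ⟨γ''(t), γ'(t)⟩ = 0 (equivalently, ‖γ'‖² is constant on I), and (ii) ⟨γ''(t), γ'(t) × n(t)⟩ = κ(t) ‖γ'(t)‖² ‖n(t)‖. -/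
open scoped RealInnerProductSpace

/-- The cross product on Euclidean 3-space. -/
noncomputable def cross3 (x y : EuclideanSpace ℝ (Fin 3)) : EuclideanSpace ℝ (Fin 3) :=
  (WithLp.equiv 2 (Fin 3 → ℝ)).symm
    ![x 1 * y 2 - x 2 * y 1, x 2 * y 0 - x 0 * y 2, x 0 * y 1 - x 1 * y 0]

lemma inner3 (x y : EuclideanSpace ℝ (Fin 3)) : ⟪x, y⟫ = x 0 * y 0 + x 1 * y 1 + x 2 * y 2 := by
  simp [PiLp.inner_apply, Fin.sum_univ_three, RCLike.inner_apply]; ring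

lemma cross3_0 (x y : EuclideanSpace ℝ (Fin 3)) : cross3 x y 0 = x 1 * y 2 - x 2 * y 1 := rfl
lemma cross3_1 (x y : EuclideanSpace ℝ (Fin 3)) : cross3 x y 1 = x 2 * y 0 - x 0 * y 2 := rfl
lemma cross3_2 (x y : EuclideanSpace ℝ (Fin 3)) : cross3 x y 2 = x 0 * y 1 - x 1 * y 0 := rfl

lemma inner_self_cross3 (x y : EuclideanSpace ℝ (Fin 3)) : ⟪x, cross3 x y⟫ = 0 := by
  rw [inner3, cross3_0, cross3_1, cross3_2]; ring

lemma inner_right_cross3 (x y : EuclideanSpace ℝ (Fin 3)) : ⟪y, cross3 x y⟫ = 0 := by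
  rw [inner3, cross3_0, cross3_1, cross3_2]; ring

lemma cross3_norm_sq (g m : EuclideanSpace ℝ (Fin 3)) :
    ⟪cross3 g m, cross3 g m⟫ = ⟪g,g⟫ * ⟪m,m⟫ - ⟪g,m⟫^2 := by
  simp only [inner3, cross3_0, cross3_1, cross3_2]; ring

lemma eq_zero_of_orth (w g m : EuclideanSpace ℝ (Fin 3))
    (hg : g ≠ 0) (hm : m ≠ 0) (hgm : ⟪g,m⟫ = 0)
    (h1 : ⟪w,g⟫ = 0) (h2 : ⟪w,m⟫ = 0) (h3 : ⟪w, cross3 g m⟫ = 0) : w = 0 := by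
  have hgg : ⟪g,g⟫ ≠ 0 := fun h => hg (inner_self_eq_zero.mp h)
  have hmm : ⟪m,m⟫ ≠ 0 := fun h => hm (inner_self_eq_zero.mp h)
  have hGM : ⟪g,g⟫ * ⟪m,m⟫ ≠ 0 := mul_ne_zero hgg hmm
  simp only [inner3, cross3_0, cross3_1, cross3_2] at h1 h2 h3 hgm hGM
  have k0 : (g 0*g 0+g 1*g 1+g 2*g 2) * (m 0*m 0+m 1*m 1+m 2*m 2) * w 0 = 0 := by
    linear_combination (g 1 * m 2 - g 2 * m 1) * h3
      + ((g 0*g 0+g 1*g 1+g 2*g 2) * m 0 - (g 0*m 0+g 1*m 1+g 2*m 2) * g 0) * h2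
      - ((g 0*m 0+g 1*m 1+g 2*m 2) * m 0 - (m 0*m 0+m 1*m 1+m 2*m 2) * g 0) * h1
      + ((g 0*m 0+g 1*m 1+g 2*m 2) * w 0) * hgm
  have k1 : (g 0*g 0+g 1*g 1+g 2*g 2) * (m 0*m 0+m 1*m 1+m 2*m 2) * w 1 = 0 := by
    linear_combination (g 2 * m 0 - g 0 * m 2) * h3
      + ((g 0*g 0+g 1*g 1+g 2*g 2) * m 1 - (g 0*m 0+g 1*m 1+g 2*m 2) * g 1) * h2
      - ((g 0*m 0+g 1*m 1+g 2*m 2) * m 1 - (m 0*m 0+m 1*m 1+m 2*m 2) * g 1) * h1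
      + ((g 0*m 0+g 1*m 1+g 2*m 2) * w 1) * hgm
  have k2 : (g 0*g 0+g 1*g 1+g 2*g 2) * (m 0*m 0+m 1*m 1+m 2*m 2) * w 2 = 0 := by
    linear_combination (g 0 * m 1 - g 1 * m 0) * h3
      + ((g 0*g 0+g 1*g 1+g 2*g 2) * m 2 - (g 0*m 0+g 1*m 1+g 2*m 2) * g 2) * h2
      - ((g 0*m 0+g 1*m 1+g 2*m 2) * m 2 - (m 0*m 0+m 1*m 1+m 2*m 2) * g 2) * h1
      + ((g 0*m 0+g 1*m 1+g 2*m 2) * w 2) * hgm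
  have hne' : (g 0*g 0+g 1*g 1+g 2*g 2) * (m 0*m 0+m 1*m 1+m 2*m 2) ≠ 0 := hGM
  have w0 : w 0 = 0 := (mul_eq_zero.mp k0).resolve_left hne'
  have w1 : w 1 = 0 := (mul_eq_zero.mp k1).resolve_left hne'
  have w2 : w 2 = 0 := (mul_eq_zero.mp k2).resolve_left hne'
  ext i
  fin_cases i
  · exact w0
  · exact w1
  · exact w2

lemma pointwise_iff (a g m : EuclideanSpace ℝ (Fin 3)) (k : ℝ)
    (hg : g ≠ 0) (hm : m ≠ 0) (hgm : ⟪g,m⟫ = 0) :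
    a - (⟪a,m⟫ / ‖m‖^2) • m = (k / ‖m‖) • cross3 g m ↔
      (⟪a,g⟫ = 0 ∧ ⟪a, cross3 g m⟫ = k * ‖g‖^2 * ‖m‖) := by
  have hmn : ‖m‖ ≠ 0 := norm_ne_zero_iff.mpr hm
  have hmsq : ⟪m,m⟫ = ‖m‖^2 := real_inner_self_eq_norm_sq m
  have hgsq : ⟪g,g⟫ = ‖g‖^2 := real_inner_self_eq_norm_sq g
  have hcc : ⟪cross3 g m, cross3 g m⟫ = ‖g‖^2 * ‖m‖^2 := by
    rw [cross3_norm_sq, hgm, hmsq, hgsq]; ring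
  have hmg : ⟪m,g⟫ = 0 := by rw [real_inner_comm]; exact hgm
  have hcg : ⟪cross3 g m, g⟫ = 0 := by rw [real_inner_comm]; exact inner_self_cross3 g m
  have hcm : ⟪cross3 g m, m⟫ = 0 := by rw [real_inner_comm]; exact inner_right_cross3 g m
  have hmc : ⟪m, cross3 g m⟫ = 0 := inner_right_cross3 g m
  constructor
  · intro h
    constructor
    · have e1 : ⟪a - (⟪a,m⟫ / ‖m‖^2) • m, g⟫ = ⟪(k / ‖m‖) • cross3 g m, g⟫ := by rw [h]
      rw [inner_sub_left, real_inner_smul_left, real_inner_smul_left, hmg, hcg] at e1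
      linarith [e1]
    · have e2 : ⟪a - (⟪a,m⟫ / ‖m‖^2) • m, cross3 g m⟫
          = ⟪(k / ‖m‖) • cross3 g m, cross3 g m⟫ := by rw [h]
      rw [inner_sub_left, real_inner_smul_left, real_inner_smul_left, hmc, hcc] at e2
      have e3 : ⟪a, cross3 g m⟫ = (k / ‖m‖) * (‖g‖^2 * ‖m‖^2) := by linarith
      rw [e3]; field_simp
  · rintro ⟨h1, h2⟩
    have hw : (a - (⟪a,m⟫ / ‖m‖^2) • m) - (k / ‖m‖) • cross3 g m = 0 := by
      apply eq_zero_of_orth _ g m hg hm hgm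
      · rw [inner_sub_left, inner_sub_left, real_inner_smul_left, real_inner_smul_left,
          hmg, hcg, h1]; ring
      · rw [inner_sub_left, inner_sub_left, real_inner_smul_left, real_inner_smul_left,
          hmsq, hcm]
        field_simp; ring
      · rw [inner_sub_left, inner_sub_left, real_inner_smul_left, real_inner_smul_left,
          hmc, hcc, h2]
        field_simp; ring
    exact sub_eq_zero.mp hw

/-- Proposition 2.3: for a curve `γ = S (u, v)` on an immersed surface `S : U → ℝ³`
with normal `N = S_u × S_v`, the prescribed geodesic curvature (magnetic geodesic)
equation is equivalent to the system `⟨γ'', γ'⟩ = 0` (constant speed) and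
`⟨γ'', γ' × n⟩ = κ ‖γ'‖² ‖n‖`. -/
theorem magnetic_geodesic_iff_system_R3
    (U : Set (ℝ × ℝ)) (hU : IsOpen U)
    (S : ℝ × ℝ → EuclideanSpace ℝ (Fin 3)) (hS : ContDiffOn ℝ (⊤ : ℕ∞) S U)
    (Su Sv N : ℝ × ℝ → EuclideanSpace ℝ (Fin 3))
    (hSu : ∀ p ∈ U, Su p = fderiv ℝ S p (1, 0))
    (hSv : ∀ p ∈ U, Sv p = fderiv ℝ S p (0, 1))
    (hN : ∀ p ∈ U, N p = cross3 (Su p) (Sv p))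
    (hNne : ∀ p ∈ U, N p ≠ 0)
    (hImm : ∀ p ∈ U, LinearIndependent ℝ ![Su p, Sv p])
    (I : Set ℝ) (u v : ℝ → ℝ) (hUV : ∀ t ∈ I, (u t, v t) ∈ U)
    (u' v' : ℝ → ℝ)
    (hu : ∀ t ∈ I, HasDerivAt u (u' t) t)
    (hv : ∀ t ∈ I, HasDerivAt v (v' t) t)
    (γ γ' γ'' : ℝ → EuclideanSpace ℝ (Fin 3))
    (hγdef : ∀ t, γ t = S (u t, v t))
    (hγ : ∀ t ∈ I, HasDerivAt γ (γ' t) t)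
    (hγ' : ∀ t ∈ I, HasDerivAt γ' (γ'' t) t)
    (hvel : ∀ t ∈ I, γ' t ≠ 0)
    (n : ℝ → EuclideanSpace ℝ (Fin 3)) (hn : ∀ t, n t = N (u t, v t))
    (κ : ℝ → ℝ) :
    (∀ t ∈ I, γ'' t - (⟪γ'' t, n t⟫ / ‖n t‖ ^ 2) • n t
        = (κ t / ‖n t‖) • cross3 (γ' t) (n t)) ↔
    ((∀ t ∈ I, ⟪γ'' t, γ' t⟫ = 0) ∧
      (∀ t ∈ I, ⟪γ'' t, cross3 (γ' t) (n t)⟫ = κ t * ‖γ' t‖ ^ 2 * ‖n t‖)) := by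
  -- tangency: γ' t is a combination of Su, Sv, hence orthogonal to n t
  have hortho : ∀ t ∈ I, ⟪γ' t, n t⟫ = 0 := by
    intro t ht
    set p := (u t, v t) with hp
    have hpU : p ∈ U := hUV t ht
    have hSd : HasFDerivAt S (fderiv ℝ S p) p :=
      ((hS.contDiffAt (hU.mem_nhds hpU)).differentiableAt (by simp)).hasFDerivAt
    have hc : HasDerivAt (fun s => (u s, v s)) (u' t, v' t) t := (hu t ht).prodMk (hv t ht)
    have hcomp : HasDerivAt γ (fderiv ℝ S p (u' t, v' t)) t := by
      have h := hSd.comp_hasDerivAt t hc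
      have hγe : γ = S ∘ fun s => (u s, v s) := funext fun s => hγdef s
      rw [hγe]; exact h
    have huniq : γ' t = fderiv ℝ S p (u' t, v' t) := (hγ t ht).unique hcomp
    have hsplit : ((u' t, v' t) : ℝ × ℝ) = u' t • (1, 0) + v' t • (0, 1) := by
      simp [Prod.ext_iff]
    have hγ'eq : γ' t = u' t • Su p + v' t • Sv p := by
      rw [huniq, hsplit, map_add, map_smul, map_smul, hSu p hpU, hSv p hpU]
    rw [hγ'eq, hn, ← hp, hN p hpU, inner_add_left, real_inner_smul_left,
      real_inner_smul_left, inner_self_cross3, inner_right_cross3]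
    ring
  have hnne : ∀ t ∈ I, n t ≠ 0 := by
    intro t ht
    rw [hn]
    exact hNne _ (hUV t ht)
  constructor
  · intro h
    exact ⟨fun t ht => ((pointwise_iff (γ'' t) (γ' t) (n t) (κ t) (hvel t ht) (hnne t ht)
        (hortho t ht)).mp (h t ht)).1,
      fun t ht => ((pointwise_iff (γ'' t) (γ' t) (n t) (κ t) (hvel t ht) (hnne t ht)
        (hortho t ht)).mp (h t ht)).2⟩
  · rintro ⟨h1, h2⟩ t ht
    exact (pointwise_iff (γ'' t) (γ' t) (n t) (κ t) (hvel t ht) (hnne t ht)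
      (hortho t ht)).mpr ⟨h1 t ht, h2 t ht⟩
end

section
/- Avoidance of lightlike singularities: Equip ℝ³ with the Minkowski bilinear form ⟨x, y⟩_L = x₁y₁ + x₂y₂ − x₃y₃. Let f : ℝ² → ℝ be twice continuously differentiable with f(0,0) = 0, f_u(0,0) = 1, f_v(0,0) = 0 (so the tangent plane of the graph of f at the origin is lightlike). Let θ ∈ ℝ with sin θ ≠ 0, let T > 0, and let u, v : [0, T] → ℝ be continuously differentiable on [0, T] and twice differentiable on (0, T], with u(0) = v(0) = 0, u'(0) = cos θ, v'(0) = sin θ. Set γ(t) = (u(t), v(t), f(u(t), v(t))) and along the curve write R = f_{uu} u'² + 2 f_{uv} u' v' + f_{vv} v'² and h⁻¹ = 1 − f_u² − f_v², all evaluated at (u(t), v(t)). Assume: (i) h⁻¹(t) > 0 for t ∈ (0, T] (spacelike tangent planes along the curve); (ii) ⟨γ'(t), γ'(t)⟩_L = sin²θ for all t ∈ (0, T] (constant speed); and (iii) the quantity 𝒯(t) = √(h⁻¹) · (u' v'' − v' u'') + (1/√(h⁻¹)) · R · (v' f_u − u' f_v) is bounded on (0, T] (bounded geodesic curvature). Then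 f_{uu}(0,0) cos²θ + 2 f_{uv}(0,0) cos θ sin θ + f_{vv}(0,0) sin²θ = 0. -/
/-!
Along the curve, `h⁻¹ = 1 - f_u² - f_v²` vanishes at `t = 0` and has a one-sided derivative
there, so `h⁻¹ = O(t)`, while the factor `R · (v' f_u - u' f_v)` in the second term of `𝒯`
tends to `Q sin θ`, where `Q` is the Hessian form in the direction `θ`. If `Q sin θ ≠ 0`,
boundedness of `𝒯` forces the rotation rate `u'v'' - v'u''` of the velocity to have the sign of
`-Q sin θ` and size `≳ 1/h⁻¹ ≳ 1/t`. The slope of `(u', v')` in the frame rotated by `θ` then has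
derivative `≳ 1/t`, so it diverges like `log t` as `t → 0⁺`, although `(u', v') → (cos θ, sin θ)`
makes it tend to `0`.
-/

open Filter Topology Set Asymptotics

theorem ContDiff.fderiv_apply_const {𝕜 E F : Type*} [NontriviallyNormedField 𝕜]
    [NormedAddCommGroup E] [NormedSpace 𝕜 E] [NormedAddCommGroup F] [NormedSpace 𝕜 F]
    {f : E → F} {n : WithTop ℕ∞} (hf : ContDiff 𝕜 (n + 1) f) (w : E) :
    ContDiff 𝕜 n fun p => fderiv 𝕜 f p w :=
  (hf.fderiv_right le_rfl).clm_apply contDiff_const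

theorem tendsto_atBot_of_div_le_deriv {N N' : ℝ → ℝ} {κ : ℝ} (hκ : 0 < κ)
    (hN : ∀ᶠ t in 𝓝[>] 0, HasDerivAt N (N' t) t ∧ κ / t ≤ N' t) :
    Tendsto N (𝓝[>] 0) atBot := by
  obtain ⟨b, hb, hsub⟩ := mem_nhdsGT_iff_exists_Ioo_subset.1 hN
  have hb0 : (0 : ℝ) < b := hb
  have hmono : MonotoneOn (fun t => N t - κ * Real.log t) (Ioo 0 b) := by
    have hderiv : ∀ t ∈ Ioo 0 b, HasDerivAt (fun t => N t - κ * Real.log t) (N' t - κ * t⁻¹) t :=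
      fun t ht => (hsub ht).1.sub ((Real.hasDerivAt_log ht.1.ne').const_mul κ)
    refine monotoneOn_of_hasDerivWithinAt_nonneg (convex_Ioo 0 b)
      (fun t ht => (hderiv t ht).continuousAt.continuousWithinAt) (by
        simpa only [interior_Ioo] using fun t ht => (hderiv t ht).hasDerivWithinAt) ?_
    rw [interior_Ioo]
    intro t ht
    simpa only [sub_nonneg, div_eq_mul_inv] using (hsub ht).2
  set m := b / 2
  have hm : m ∈ Ioo 0 b := ⟨half_pos hb0, half_lt_self hb0⟩
  refine tendsto_atBot_mono' _ ?_
    (tendsto_atBot_add_const_left _ (N m - κ * Real.log m)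
      (Real.tendsto_log_nhdsGT_zero.const_mul_atBot hκ))
  filter_upwards [Ioo_mem_nhdsGT hm.1] with t ht
  have hle := hmono ⟨ht.1, ht.2.trans hm.2⟩ hm ht.2.le
  simp only at hle
  linarith

theorem HasDerivAt.rotated_slope {x y : ℝ → ℝ} {x' y' c s t : ℝ} (hcs : c ^ 2 + s ^ 2 = 1)
    (hx : HasDerivAt x x' t) (hy : HasDerivAt y y' t) (hD : c * x t + s * y t ≠ 0) :
    HasDerivAt (fun r => (s * x r - c * y r) / (c * x r + s * y r))
      (-(x t * y' - y t * x') / (c * x t + s * y t) ^ 2) t := by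
  refine (((hx.const_mul s).sub (hy.const_mul c)).div
    ((hx.const_mul c).add (hy.const_mul s)) hD).congr_deriv ?_
  simp only [Pi.add_apply, Pi.sub_apply]
  field_simp
  linear_combination (y t * x' - x t * y') * hcs

theorem mul_le_neg_sq_div_of_abs_mul_add_div_le {W K S a C : ℝ} (hW : 0 < W)
    (hb : |W * K + 1 / W * S| ≤ C) (hS : a ^ 2 / 2 ≤ a * S) (hWC : W * C ≤ |a| / 4) :
    a * K ≤ -(a ^ 2 / (4 * W ^ 2)) := by
  have habs : a * (W * K + 1 / W * S) ≤ |a| * C :=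
    (le_abs_self _).trans (by rw [abs_mul]; exact mul_le_mul_of_nonneg_left hb (abs_nonneg a))
  have hK : a * W ^ 2 * K ≤ -(a ^ 2 / 4) := calc
    a * W ^ 2 * K = W * (a * (W * K + 1 / W * S)) - a * S := by field_simp; ring
    _ ≤ |a| * (W * C) - a ^ 2 / 2 := by linarith [mul_le_mul_of_nonneg_left habs hW.le]
    _ ≤ |a| * (|a| / 4) - a ^ 2 / 2 := by gcongr
    _ = -(a ^ 2 / 4) := by rw [← sq_abs a]; ring
  rw [le_neg, div_le_iff₀ (by positivity)]
  linarith

theorem limit_eq_zero_of_curvature_bounded {x y x' y' g S : ℝ → ℝ} {c s a C : ℝ}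
    (hcs : c ^ 2 + s ^ 2 = 1) (hx : Tendsto x (𝓝[>] 0) (𝓝 c)) (hy : Tendsto y (𝓝[>] 0) (𝓝 s))
    (hderiv : ∀ᶠ t in 𝓝[>] 0, HasDerivAt x (x' t) t ∧ HasDerivAt y (y' t) t)
    (hgpos : ∀ᶠ t in 𝓝[>] 0, 0 < g t) (hg : g =O[𝓝[>] 0] fun t => t)
    (hS : Tendsto S (𝓝[>] 0) (𝓝 a))
    (hbound : ∀ᶠ t in 𝓝[>] 0,
      |√(g t) * (x t * y' t - y t * x' t) + 1 / √(g t) * S t| ≤ C) :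
    a = 0 := by
  by_contra ha
  obtain ⟨L, hL, hgL⟩ := hg.exists_pos
  have hD : Tendsto (fun t => c * x t + s * y t) (𝓝[>] 0) (𝓝 1) := by
    simpa only [← sq, hcs] using (hx.const_mul c).add (hy.const_mul s)
  have hW : Tendsto (fun t => √(g t)) (𝓝[>] 0) (𝓝 0) := by
    simpa only [Real.sqrt_zero] using
      (hg.trans_tendsto (tendsto_nhdsWithin_of_tendsto_nhds tendsto_id)).sqrt
  have hN : Tendsto (fun t => a * ((s * x t - c * y t) / (c * x t + s * y t))) (𝓝[>] 0) (𝓝 0) := by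
    simpa only [Pi.div_apply, mul_comm s c, sub_self, zero_div, mul_zero] using
      (((hx.const_mul s).sub (hy.const_mul c)).div hD one_ne_zero).const_mul a
  refine not_tendsto_atBot_of_tendsto_nhds hN
    (tendsto_atBot_of_div_le_deriv (κ := a ^ 2 / (16 * L))
      (N' := fun t => a * (-(x t * y' t - y t * x' t) / (c * x t + s * y t) ^ 2))
      (by positivity) ?_)
  have haS : a ^ 2 / 2 < a * a := by nlinarith [sq_pos_of_ne_zero ha]
  have haC : 0 * C < |a| / 4 := by simpa using abs_pos.2 ha
  filter_upwards [hderiv, hgpos, hgL.bound, hbound, self_mem_nhdsWithin,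
    hD.eventually (Ioo_mem_nhds one_half_lt_one one_lt_two),
    (hS.const_mul a).eventually (Ioi_mem_nhds haS),
    (hW.mul_const C).eventually (Iio_mem_nhds haC)] with t ⟨hxt, hyt⟩ hgt hgLt hbt ht hDt hSt hWt
  have hDpos : 0 < c * x t + s * y t := one_half_pos.trans hDt.1
  refine ⟨((hxt.rotated_slope hcs hyt hDpos.ne').const_mul a), ?_⟩
  have hrot := mul_le_neg_sq_div_of_abs_mul_add_div_le (Real.sqrt_pos.2 hgt) hbt hSt.le hWt.le
  rw [Real.sq_sqrt hgt.le] at hrot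
  have hgle : g t ≤ L * t := by
    simpa only [Real.norm_eq_abs, abs_of_pos hgt, abs_of_pos (show (0:ℝ) < t from ht)] using hgLt
  have hD2 : (c * x t + s * y t) ^ 2 ≤ 4 := by nlinarith [hDt.2]
  calc a ^ 2 / (16 * L) / t = a ^ 2 / (4 * (L * t)) / 4 := by ring
    _ ≤ a ^ 2 / (4 * g t) / (c * x t + s * y t) ^ 2 := by gcongr
    _ ≤ -(a * (x t * y' t - y t * x' t)) / (c * x t + s * y t) ^ 2 := by gcongr; linarith
    _ = a * (-(x t * y' t - y t * x' t) / (c * x t + s * y t) ^ 2) := by ring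

theorem lightlike_singularity_direction_condition_general
    (f : ℝ × ℝ → ℝ) (hf : ContDiff ℝ 2 f)
    (fu fv fuu fuv fvv : ℝ × ℝ → ℝ)
    (hfu : ∀ p, fu p = fderiv ℝ f p (1, 0))
    (hfv : ∀ p, fv p = fderiv ℝ f p (0, 1))
    (hfuu : ∀ p, fuu p = fderiv ℝ fu p (1, 0))
    (hfuv : ∀ p, fuv p = fderiv ℝ fu p (0, 1))
    (hfvv : ∀ p, fvv p = fderiv ℝ fv p (0, 1))
    (hfu0 : fu (0, 0) = 1) (hfv0 : fv (0, 0) = 0)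
    (θ : ℝ) (hθ : Real.sin θ ≠ 0) (T : ℝ) (hT : 0 < T)
    (u v u' v' u'' v'' : ℝ → ℝ)
    (hu : ∀ t ∈ Set.Icc 0 T, HasDerivWithinAt u (u' t) (Set.Icc 0 T) t)
    (hv : ∀ t ∈ Set.Icc 0 T, HasDerivWithinAt v (v' t) (Set.Icc 0 T) t)
    (hu'c : ContinuousOn u' (Set.Icc 0 T))
    (hv'c : ContinuousOn v' (Set.Icc 0 T))
    (hu' : ∀ t ∈ Set.Ioc 0 T, HasDerivAt u' (u'' t) t)
    (hv' : ∀ t ∈ Set.Ioc 0 T, HasDerivAt v' (v'' t) t)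
    (hu0 : u 0 = 0) (hv0 : v 0 = 0)
    (hu'0 : u' 0 = Real.cos θ) (hv'0 : v' 0 = Real.sin θ)
    -- (i) spacelike tangent planes along the curve: `h⁻¹ = 1 − f_u² − f_v² > 0`
    (hspace : ∀ t ∈ Set.Ioc 0 T,
      0 < 1 - fu (u t, v t) ^ 2 - fv (u t, v t) ^ 2)
    -- (iii) bounded geodesic curvature quantity `𝒯`
    (Cb : ℝ)
    (hbound : ∀ t ∈ Set.Ioc 0 T,
      |Real.sqrt (1 - fu (u t, v t) ^ 2 - fv (u t, v t) ^ 2)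
          * (u' t * v'' t - v' t * u'' t)
        + (1 / Real.sqrt (1 - fu (u t, v t) ^ 2 - fv (u t, v t) ^ 2))
          * (fuu (u t, v t) * u' t ^ 2 + 2 * fuv (u t, v t) * u' t * v' t
              + fvv (u t, v t) * v' t ^ 2)
          * (v' t * fu (u t, v t) - u' t * fv (u t, v t))| ≤ Cb) :
    fuu (0, 0) * Real.cos θ ^ 2 + 2 * fuv (0, 0) * Real.cos θ * Real.sin θ
      + fvv (0, 0) * Real.sin θ ^ 2 = 0 := by
  have hfuC : ContDiff ℝ 1 fu := funext hfu ▸ hf.fderiv_apply_const (1, 0)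
  have hfvC : ContDiff ℝ 1 fv := funext hfv ▸ hf.fderiv_apply_const (0, 1)
  have hfuuC : Continuous fuu := (funext hfuu ▸ hfuC.fderiv_apply_const (n := 0) (1, 0)).continuous
  have hfuvC : Continuous fuv := (funext hfuv ▸ hfuC.fderiv_apply_const (n := 0) (0, 1)).continuous
  have hfvvC : Continuous fvv := (funext hfvv ▸ hfvC.fderiv_apply_const (n := 0) (0, 1)).continuous
  have h0 : (0 : ℝ) ∈ Icc 0 T := left_mem_Icc.2 hT.le
  have hnhds : 𝓝[>] (0 : ℝ) ≤ 𝓝[Icc 0 T] 0 :=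
    nhdsWithin_Ioo_eq_nhdsGT hT ▸ nhdsWithin_mono _ Ioo_subset_Icc_self
  have hγ : DifferentiableWithinAt ℝ (fun t => (u t, v t)) (Icc 0 T) 0 :=
    (hu 0 h0).differentiableWithinAt.prodMk (hv 0 h0).differentiableWithinAt
  have hx : Tendsto u' (𝓝[>] 0) (𝓝 (Real.cos θ)) := hu'0 ▸ (hu'c 0 h0).tendsto.mono_left hnhds
  have hy : Tendsto v' (𝓝[>] 0) (𝓝 (Real.sin θ)) := hv'0 ▸ (hv'c 0 h0).tendsto.mono_left hnhds
  have hcomp {F : ℝ × ℝ → ℝ} (hF : Continuous F) :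
      Tendsto (fun t => F (u t, v t)) (𝓝[>] 0) (𝓝 (F (0, 0))) := by
    simpa only [Function.comp_def, hu0, hv0] using
      (hF.continuousAt.comp_continuousWithinAt hγ.continuousWithinAt).tendsto.mono_left hnhds
  have hg : (fun t => 1 - fu (u t, v t) ^ 2 - fv (u t, v t) ^ 2) =O[𝓝[>] 0] fun t => t := by
    have hdiff {F : ℝ × ℝ → ℝ} (hF : ContDiff ℝ 1 F) :=
      ((hF.differentiable one_ne_zero).differentiableAt).comp_differentiableWithinAt _ hγ
    simpa [hu0, hv0, hfu0, hfv0] using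
      (((differentiableWithinAt_const (1 : ℝ)).sub ((hdiff hfuC).pow 2)).sub
        ((hdiff hfvC).pow 2)).isBigO_sub.mono hnhds
  have hS := ((((hcomp hfuuC).mul (hx.pow 2)).add
    ((((tendsto_const_nhds (x := (2 : ℝ))).mul (hcomp hfuvC)).mul hx).mul hy)).add
    ((hcomp hfvvC).mul (hy.pow 2))).mul
    ((hy.mul (hcomp hfuC.continuous)).sub (hx.mul (hcomp hfvC.continuous)))
  have hsource := limit_eq_zero_of_curvature_bounded (Real.cos_sq_add_sin_sq θ) hx hy
    (by filter_upwards [Ioc_mem_nhdsGT hT] with t ht using ⟨hu' t ht, hv' t ht⟩)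
    (by filter_upwards [Ioc_mem_nhdsGT hT] with t ht using hspace t ht) hg hS
    (by filter_upwards [Ioc_mem_nhdsGT hT] with t ht
        using by simpa only [mul_assoc] using hbound t ht)
  rw [hfu0, hfv0, mul_one, mul_zero, sub_zero] at hsource
  exact (mul_eq_zero.1 hsource).resolve_right hθ

/-- Theorem 3.1 (avoidance of lightlike singularities): let the graph of `f` in
Minkowski 3-space have a lightlike tangent plane at the origin
(`f (0,0) = 0`, `f_u (0,0) = 1`, `f_v (0,0) = 0`), and let
`γ (t) = (u t, v t, f (u t, v t))` be a curve reaching the origin at `t = 0` with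
direction `(cos θ, sin θ)`, `sin θ ≠ 0`, which for `t ∈ (0, T]` has spacelike
tangent planes, constant Minkowski speed `sin²θ`, and bounded
geodesic-curvature quantity `𝒯`. Then the incoming direction annihilates the
Hessian quadratic form:
`f_uu (0,0) cos²θ + 2 f_uv (0,0) cos θ sin θ + f_vv (0,0) sin²θ = 0`. -/
theorem lightlike_singularity_direction_condition
    (f : ℝ × ℝ → ℝ) (hf : ContDiff ℝ 2 f)
    (fu fv fuu fuv fvv : ℝ × ℝ → ℝ)
    (hfu : ∀ p, fu p = fderiv ℝ f p (1, 0))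
    (hfv : ∀ p, fv p = fderiv ℝ f p (0, 1))
    (hfuu : ∀ p, fuu p = fderiv ℝ fu p (1, 0))
    (hfuv : ∀ p, fuv p = fderiv ℝ fu p (0, 1))
    (hfvv : ∀ p, fvv p = fderiv ℝ fv p (0, 1))
    (hf0 : f (0, 0) = 0) (hfu0 : fu (0, 0) = 1) (hfv0 : fv (0, 0) = 0)
    (θ : ℝ) (hθ : Real.sin θ ≠ 0) (T : ℝ) (hT : 0 < T)
    (u v u' v' u'' v'' : ℝ → ℝ)
    (hu : ∀ t ∈ Set.Icc 0 T, HasDerivWithinAt u (u' t) (Set.Icc 0 T) t)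
    (hv : ∀ t ∈ Set.Icc 0 T, HasDerivWithinAt v (v' t) (Set.Icc 0 T) t)
    (hu'c : ContinuousOn u' (Set.Icc 0 T))
    (hv'c : ContinuousOn v' (Set.Icc 0 T))
    (hu' : ∀ t ∈ Set.Ioc 0 T, HasDerivAt u' (u'' t) t)
    (hv' : ∀ t ∈ Set.Ioc 0 T, HasDerivAt v' (v'' t) t)
    (hu0 : u 0 = 0) (hv0 : v 0 = 0)
    (hu'0 : u' 0 = Real.cos θ) (hv'0 : v' 0 = Real.sin θ)
    -- (i) spacelike tangent planes along the curve: `h⁻¹ = 1 − f_u² − f_v² > 0`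
    (hspace : ∀ t ∈ Set.Ioc 0 T,
      0 < 1 - fu (u t, v t) ^ 2 - fv (u t, v t) ^ 2)
    -- (ii) constant Minkowski speed: `⟨γ', γ'⟩_L = sin²θ`
    (hspeed : ∀ t ∈ Set.Ioc 0 T,
      u' t ^ 2 + v' t ^ 2
        - (fu (u t, v t) * u' t + fv (u t, v t) * v' t) ^ 2 = Real.sin θ ^ 2)
    -- (iii) bounded geodesic curvature quantity `𝒯`
    (Cb : ℝ)
    (hbound : ∀ t ∈ Set.Ioc 0 T,
      |Real.sqrt (1 - fu (u t, v t) ^ 2 - fv (u t, v t) ^ 2)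
          * (u' t * v'' t - v' t * u'' t)
        + (1 / Real.sqrt (1 - fu (u t, v t) ^ 2 - fv (u t, v t) ^ 2))
          * (fuu (u t, v t) * u' t ^ 2 + 2 * fuv (u t, v t) * u' t * v' t
              + fvv (u t, v t) * v' t ^ 2)
          * (v' t * fu (u t, v t) - u' t * fv (u t, v t))| ≤ Cb) :
    fuu (0, 0) * Real.cos θ ^ 2 + 2 * fuv (0, 0) * Real.cos θ * Real.sin θ
      + fvv (0, 0) * Real.sin θ ^ 2 = 0 :=
  lightlike_singularity_direction_condition_general f hf fu fv fuu fuv fvv hfu hfv hfuu hfuv hfvv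
    hfu0 hfv0 θ hθ T hT u v u' v' u'' v'' hu hv hu'c hv'c hu' hv' hu0 hv0 hu'0 hv'0 hspace Cb hbound
end
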